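/- Let A be a strand symmetric (SSM) matrix, i.e. a 4×4 real matrix with rows (a,b,c,d), (e,f,g,h), (h,g,f,e), (d,c,b,a) where a+b+c+d=1 and e+f+g+h=1. Setting λ = a+d, μ = f+g, α = f-g, α' = h-e, β = a-d, β' = c-b, we have det(A) = (λ+μ-1)·(αβ - α'β'). -/

import Mathlib

/-
A strand symmetric matrix commutes with the reversal of coordinates, so in the basis
`e₁ + e₄, e₂ + e₃, e₁ - e₄, e₂ - e₃` it splits into the two 2 × 2 blocks
`[[a + d, b + c], [e + h, f + g]]` and `[[a - d, b - c], [e - h, f - g]]`.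
The row sums turn the determinant of the first block into `λ + μ - 1`; the second is `αβ - α'β'`.
-/

theorem Matrix.det_strandSymmetric {R : Type*} [CommRing R] (a b c d e f g h : R) :
    (!![a, b, c, d; e, f, g, h; h, g, f, e; d, c, b, a] : Matrix (Fin 4) (Fin 4) R).det =
      ((a + d) * (f + g) - (b + c) * (e + h)) * ((a - d) * (f - g) - (b - c) * (e - h)) := by
  rw [Matrix.det_succ_row_zero]
  simp [Fin.sum_univ_succ, Matrix.det_fin_three, Fin.succAbove]
  ring

theorem stmt_13 (a b c d e f g h : ℝ)
    (hsum1 : a + b + c + d = 1) (hsum2 : e + f + g + h = 1)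
    (A : Matrix (Fin 4) (Fin 4) ℝ)
    (hA : A = !![a, b, c, d; e, f, g, h; h, g, f, e; d, c, b, a]) :
    A.det = ((a + d) + (f + g) - 1) * ((f - g) * (a - d) - (h - e) * (c - b)) := by
  have hbc : b + c = 1 - (a + d) := by linarith
  have heh : e + h = 1 - (f + g) := by linarith
  rw [hA, Matrix.det_strandSymmetric, hbc, heh]
  ring
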